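/- Let α ∈ ℝ be badly approximable, 0 < δ ≤ 1/2, ε > 0, and let (X_n) be i.i.d. uniform random variables on [0,1]. Then there is a constant C (depending only on α, δ, ε) such that for all N, ∑_{r ∈ ℤ \ {0}} |∑_{k=1}^N ∑_{l=1, l≠k}^N E[e(r(ε(X_k−X_l) + kα − lα))]| ≤ C · N^{1+δ}. -/

import Mathlib

open MeasureTheory ProbabilityTheory Finset Real

noncomputable def e2pi (x : ℝ) : ℂ := Complex.exp (2 * Real.pi * Complex.I * x)

/-- distance from a real number to the nearest integer -/
noncomputable def distNearestInt (x : ℝ) : ℝ := |x - round x|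

lemma e2pi_add (x y : ℝ) : e2pi (x + y) = e2pi x * e2pi y := by
  rw [e2pi, e2pi, e2pi, ← Complex.exp_add]
  push_cast; ring_nf

lemma e2pi_zero : e2pi 0 = 1 := by simp [e2pi]

lemma abs_e2pi (x : ℝ) : ‖(e2pi x)‖ = 1 := by
  rw [e2pi, Complex.norm_exp]
  norm_num

lemma continuous_e2pi : Continuous e2pi :=
  Complex.continuous_exp.comp (continuous_const.mul Complex.continuous_ofReal)

lemma abs_e2pi_sub_one (θ : ℝ) :
    ‖(e2pi θ - 1)‖ = 2 * |Real.sin (Real.pi * θ)| := by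
  have h1 : e2pi θ = Complex.exp ((2 * Real.pi * θ : ℝ) * Complex.I) := by
    rw [e2pi]; push_cast; ring_nf
  have h2 : e2pi θ - 1 = Complex.ofReal (Real.cos (2*Real.pi*θ) - 1)
      + Complex.ofReal (Real.sin (2*Real.pi*θ)) * Complex.I := by
    rw [h1, Complex.exp_mul_I]
    push_cast [Complex.ofReal_cos, Complex.ofReal_sin]
    ring
  rw [h2, Complex.norm_def, Complex.normSq_add_mul_I]
  have hsct := Real.sin_sq_add_cos_sq (Real.pi * θ)
  have hc2 : Real.cos (2*Real.pi*θ) = 1 - 2 * Real.sin (Real.pi*θ)^2 := by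
    have := Real.cos_two_mul (Real.pi * θ)
    have h3 : 2 * (Real.pi * θ) = 2*Real.pi*θ := by ring
    rw [h3] at this
    rw [this]; nlinarith
  have h4 : (Real.cos (2*Real.pi*θ) - 1)^2 + Real.sin (2*Real.pi*θ)^2
      = (2 * |Real.sin (Real.pi*θ)|)^2 := by
    have hs2 := Real.sin_sq_add_cos_sq (2*Real.pi*θ)
    have habs : |Real.sin (Real.pi*θ)|^2 = Real.sin (Real.pi*θ)^2 := sq_abs _
    nlinarith
  rw [h4, Real.sqrt_sq (by positivity)]

lemma distNearestInt_nonneg (x : ℝ) : 0 ≤ distNearestInt x := abs_nonneg _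

lemma sin_ge (θ : ℝ) : 2 * distNearestInt θ ≤ |Real.sin (Real.pi * θ)| := by
  set u := θ - round θ with hu
  have hround : θ = u + (round θ : ℤ) := by rw [hu]; ring
  have h1 : Real.sin (Real.pi * θ) = (-1)^(round θ) * Real.sin (Real.pi * u) := by
    have : Real.pi * θ = Real.pi * u + (round θ : ℤ) * Real.pi := by
      nth_rw 1 [hround]; push_cast; ring
    rw [this, Real.sin_add_int_mul_pi]
  have h2 : |Real.sin (Real.pi * θ)| = |Real.sin (Real.pi * u)| := by
    rw [h1, abs_mul]
    rcases Int.even_or_odd (round θ) with he | ho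
    · rw [he.neg_one_zpow]; simp
    · rw [Odd.neg_one_zpow ho]; simp
  have h3 : |Real.sin (Real.pi * u)| = Real.sin (Real.pi * |u|) := by
    rcases le_or_gt 0 u with h | h
    · rw [abs_of_nonneg h, abs_of_nonneg]
      exact Real.sin_nonneg_of_nonneg_of_le_pi (by positivity)
        (by nlinarith [abs_sub_round θ, Real.pi_pos, abs_of_nonneg h])
    · rw [abs_of_neg h]
      have : Real.pi * u = -(Real.pi * -u) := by ring
      rw [this, Real.sin_neg, abs_neg, abs_of_nonneg]
      exact Real.sin_nonneg_of_nonneg_of_le_pi (by nlinarith [Real.pi_pos])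
        (by nlinarith [abs_sub_round θ, Real.pi_pos, abs_of_neg h])
  have h4 : 2 * |u| ≤ Real.sin (Real.pi * |u|) := by
    have h5 : Real.pi * |u| ≤ Real.pi / 2 := by
      nlinarith [abs_sub_round θ, Real.pi_pos]
    have := Real.mul_le_sin (x := Real.pi * |u|) (by positivity) h5
    calc 2 * |u| = 2 / Real.pi * (Real.pi * |u|) := by
          field_simp
      _ ≤ Real.sin (Real.pi * |u|) := this
  rw [h2, h3]
  exact h4

lemma four_dist_le (θ : ℝ) : 4 * distNearestInt θ ≤ ‖(e2pi θ - 1)‖ := by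
  rw [abs_e2pi_sub_one]
  have := sin_ge θ
  linarith

lemma distNearestInt_neg (x : ℝ) : distNearestInt (-x) = distNearestInt x := by
  unfold distNearestInt
  rw [abs_sub_round_eq_min, abs_sub_round_eq_min]
  rcases eq_or_ne (Int.fract x) 0 with h | h
  · rw [h, Int.fract_neg_eq_zero.mpr h]
  · rw [Int.fract_neg h]
    simp [min_comm]

lemma e2pi_nat_mul (k : ℕ) (θ : ℝ) : e2pi (k * θ) = (e2pi θ) ^ k := by
  rw [e2pi, e2pi, ← Complex.exp_nat_mul]
  push_cast; ring_nf

lemma geom_bound (N : ℕ) (θ : ℝ) (hd : 0 < distNearestInt θ) :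
    ‖(∑ k ∈ Finset.Icc 1 N, e2pi (k * θ))‖ ≤ 1 / (2 * distNearestInt θ) := by
  set z := e2pi θ with hz
  have hzne : z ≠ 1 := by
    intro h
    have h4 := four_dist_le θ
    rw [← hz, h, sub_self, norm_zero] at h4
    linarith
  have hsum : ∑ k ∈ Finset.Icc 1 N, e2pi (k * θ) = z * ((z ^ N - 1) / (z - 1)) := by
    have h1 : ∑ k ∈ Finset.Icc 1 N, e2pi (k * θ) = ∑ k ∈ Finset.Icc 1 N, z ^ k := by
      exact Finset.sum_congr rfl fun k _ => e2pi_nat_mul k θ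
    rw [h1, ← Finset.Ico_add_one_right_eq_Icc, Finset.sum_Ico_eq_sum_range]
    norm_num
    rw [← geom_sum_eq hzne N, Finset.mul_sum]
    exact Finset.sum_congr rfl fun i _ => by rw [pow_add, pow_one]
  rw [hsum]
  have habs1 : ‖z‖ = 1 := abs_e2pi θ
  have hden : 4 * distNearestInt θ ≤ ‖(z - 1)‖ := four_dist_le θ
  have hnum : ‖(z ^ N - 1)‖ ≤ 2 := by
    calc ‖(z ^ N - 1)‖ ≤ ‖(z ^ N)‖ + ‖(1:ℂ)‖ :=
          norm_sub_le _ _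
      _ = 2 := by rw [norm_pow, habs1]; norm_num
  have hpos : 0 < ‖(z - 1)‖ := lt_of_lt_of_le (by positivity) hden
  rw [norm_mul, habs1, one_mul, norm_div]
  rw [div_le_div_iff₀ hpos (by positivity)]
  calc ‖(z ^ N - 1)‖ * (2 * distNearestInt θ) ≤ 2 * (2 * distNearestInt θ) := by
        apply mul_le_mul_of_nonneg_right hnum (by positivity)
    _ ≤ 1 * ‖(z - 1)‖ := by rw [one_mul]; linarith

noncomputable def psi (t : ℝ) : ℂ := ∫ x in Set.Icc (0:ℝ) 1, e2pi (t * x)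

lemma abs_psi_le (t : ℝ) (ht : t ≠ 0) : ‖(psi t)‖ ≤ 1 / (Real.pi * |t|) := by
  have hc : (2 * Real.pi * Complex.I * t : ℂ) ≠ 0 := by
    simp [Complex.ext_iff, Real.pi_ne_zero, ht]
  have h1 : psi t = ∫ x in (0:ℝ)..1, Complex.exp ((2 * Real.pi * Complex.I * t) * x) := by
    rw [psi, intervalIntegral.integral_of_le (by norm_num : (0:ℝ) ≤ 1),
      ← MeasureTheory.integral_Icc_eq_integral_Ioc]
    apply setIntegral_congr_fun (measurableSet_Icc)
    intro x _
    unfold e2pi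
    push_cast; ring_nf
  rw [h1, integral_exp_mul_complex hc]
  simp only [Complex.ofReal_one, Complex.ofReal_zero, mul_one, mul_zero, Complex.exp_zero]
  have h2 : Complex.exp (2 * (Real.pi:ℂ) * Complex.I * (t:ℝ)) = e2pi t := rfl
  rw [h2, norm_div]
  have hden : ‖(2 * Real.pi * Complex.I * t)‖ = 2 * Real.pi * |t| := by
    rw [norm_mul, norm_mul, norm_mul, Complex.norm_two, Complex.norm_real, Real.norm_eq_abs,
      Complex.norm_real, Real.norm_eq_abs, Complex.norm_I, abs_of_pos Real.pi_pos, mul_one]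
  have hnum : ‖(e2pi t - 1)‖ ≤ 2 := by
    calc ‖(e2pi t - 1)‖ ≤ ‖(e2pi t)‖ + ‖(1:ℂ)‖ :=
          norm_sub_le _ _
      _ = 2 := by rw [abs_e2pi]; norm_num
  rw [hden]
  have hpos : 0 < Real.pi * |t| := by positivity
  rw [div_le_div_iff₀ (by linarith) hpos]
  calc ‖(e2pi t - 1)‖ * (Real.pi * |t|) ≤ 2 * (Real.pi * |t|) :=
        mul_le_mul_of_nonneg_right hnum (le_of_lt hpos)
    _ = 1 * (2 * Real.pi * |t|) := by ring

lemma factor_integral {Ω : Type*} [MeasurableSpace Ω] (P : Measure Ω) [IsProbabilityMeasure P]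
    (X : ℕ → Ω → ℝ) (hXm : ∀ n, Measurable (X n))
    (hunif : ∀ n, Measure.map (X n) P = volume.restrict (Set.Icc (0:ℝ) 1))
    (hindep : iIndepFun X P)
    (k l : ℕ) (hkl : k ≠ l) (s t : ℝ) :
    ∫ ω, e2pi (s * X k ω) * e2pi (t * X l ω) ∂P = psi s * psi t := by
  have hpair : P.map (fun ω => (X k ω, X l ω))
      = (volume.restrict (Set.Icc (0:ℝ) 1)).prod (volume.restrict (Set.Icc (0:ℝ) 1)) := by
    have h := (indepFun_iff_map_prod_eq_prod_map_map (hXm k).aemeasurable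
      (hXm l).aemeasurable).1 (hindep.indepFun hkl)
    rw [hunif k, hunif l] at h
    exact h
  have hcont : Continuous fun p : ℝ × ℝ => e2pi (s * p.1) * e2pi (t * p.2) :=
    ((continuous_e2pi.comp (continuous_const.mul continuous_fst)).mul
      (continuous_e2pi.comp (continuous_const.mul continuous_snd)))
  have hmeas : AEMeasurable (fun ω => (X k ω, X l ω)) P :=
    ((hXm k).prodMk (hXm l)).aemeasurable
  calc ∫ ω, e2pi (s * X k ω) * e2pi (t * X l ω) ∂P
      = ∫ p : ℝ × ℝ, e2pi (s * p.1) * e2pi (t * p.2) ∂(P.map (fun ω => (X k ω, X l ω))) :=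
        (integral_map hmeas hcont.aestronglyMeasurable).symm
    _ = ∫ p : ℝ × ℝ, e2pi (s * p.1) * e2pi (t * p.2)
          ∂((volume.restrict (Set.Icc (0:ℝ) 1)).prod (volume.restrict (Set.Icc (0:ℝ) 1))) := by
        rw [hpair]
    _ = psi s * psi t := integral_prod_mul (fun x => e2pi (s * x)) (fun y => e2pi (t * y))

lemma term_eq {Ω : Type*} [MeasurableSpace Ω] (P : Measure Ω) [IsProbabilityMeasure P]
    (X : ℕ → Ω → ℝ) (hXm : ∀ n, Measurable (X n))
    (hunif : ∀ n, Measure.map (X n) P = volume.restrict (Set.Icc (0:ℝ) 1))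
    (hindep : iIndepFun X P)
    (ε α : ℝ) (r : ℤ) (N : ℕ) :
    ∑ k ∈ Finset.Icc 1 N, ∑ l ∈ Finset.Icc 1 N, (if l = k then 0 else
      ∫ ω, e2pi ((r : ℝ) * (ε * (X k ω - X l ω) + (k : ℝ) * α - (l : ℝ) * α)) ∂P)
    = ((∑ k ∈ Finset.Icc 1 N, e2pi ((r:ℝ)*k*α)) * (∑ l ∈ Finset.Icc 1 N, e2pi (-(r:ℝ)*l*α))
        - (N:ℂ)) * (psi ((r:ℝ)*ε) * psi (-((r:ℝ)*ε))) := by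
  set s := Finset.Icc 1 N with hs
  set W := psi ((r:ℝ)*ε) * psi (-((r:ℝ)*ε)) with hW
  set f : ℕ → ℂ := fun k => e2pi ((r:ℝ)*k*α) with hf
  set g : ℕ → ℂ := fun l => e2pi (-(r:ℝ)*l*α) with hg
  have hint : ∀ k l : ℕ, l ≠ k →
      (∫ ω, e2pi ((r : ℝ) * (ε * (X k ω - X l ω) + (k : ℝ) * α - (l : ℝ) * α)) ∂P)
      = f k * g l * W := by
    intro k l hlk
    have hfun : (fun ω => e2pi ((r : ℝ) * (ε * (X k ω - X l ω) + (k : ℝ) * α - (l : ℝ) * α)))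
        = fun ω => (f k * g l) * (e2pi (((r:ℝ)*ε) * X k ω) * e2pi ((-((r:ℝ)*ε)) * X l ω)) := by
      funext ω
      have harg : (r : ℝ) * (ε * (X k ω - X l ω) + (k : ℝ) * α - (l : ℝ) * α)
          = ((r:ℝ)*k*α + -(r:ℝ)*l*α) + (((r:ℝ)*ε) * X k ω + (-((r:ℝ)*ε)) * X l ω) := by ring
      rw [harg, e2pi_add, e2pi_add, e2pi_add]
    rw [hfun, MeasureTheory.integral_const_mul,
      factor_integral P X hXm hunif hindep k l (Ne.symm hlk) _ _, hW, mul_assoc]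
  have hdiag : ∀ k : ℕ, f k * g k = 1 := by
    intro k
    rw [hf, hg]
    simp only []
    rw [← e2pi_add]
    have : (r:ℝ)*k*α + -(r:ℝ)*k*α = 0 := by ring
    rw [this, e2pi_zero]
  calc ∑ k ∈ s, ∑ l ∈ s, (if l = k then 0 else
        ∫ ω, e2pi ((r : ℝ) * (ε * (X k ω - X l ω) + (k : ℝ) * α - (l : ℝ) * α)) ∂P)
      = ∑ k ∈ s, ((∑ l ∈ s, f k * g l * W) - f k * g k * W) := by
        refine Finset.sum_congr rfl fun k hk => ?_
        have hterm : ∀ l ∈ s, (if l = k then (0:ℂ) else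
            ∫ ω, e2pi ((r : ℝ) * (ε * (X k ω - X l ω) + (k : ℝ) * α - (l : ℝ) * α)) ∂P)
            = f k * g l * W - (if l = k then f k * g l * W else 0) := by
          intro l _
          by_cases h : l = k
          · simp [h]
          · rw [if_neg h, if_neg h, hint k l h, sub_zero]
        rw [Finset.sum_congr rfl hterm, Finset.sum_sub_distrib,
          Finset.sum_ite_eq' s k (fun l => f k * g l * W), if_pos hk]
    _ = (∑ k ∈ s, ∑ l ∈ s, f k * g l * W) - ∑ k ∈ s, f k * g k * W := by
        rw [Finset.sum_sub_distrib]
    _ = (∑ k ∈ s, f k) * (∑ l ∈ s, g l) * W - (N:ℂ) * W := by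
        congr 1
        · calc ∑ k ∈ s, ∑ l ∈ s, f k * g l * W
              = ∑ k ∈ s, (f k * (∑ l ∈ s, g l) * W) := by
                refine Finset.sum_congr rfl fun k _ => ?_
                rw [← Finset.sum_mul, ← Finset.mul_sum]
            _ = (∑ k ∈ s, f k) * (∑ l ∈ s, g l) * W := by
                rw [← Finset.sum_mul, ← Finset.sum_mul]
        · have hterm : ∀ k ∈ s, f k * g k * W = W := fun k _ => by rw [hdiag k, one_mul]
          rw [Finset.sum_congr rfl hterm, Finset.sum_const, hs, Nat.card_Icc]
          simp [nsmul_eq_mul]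
    _ = ((∑ k ∈ s, f k) * (∑ l ∈ s, g l) - (N:ℂ)) * W := by ring

lemma abs_sum_e2pi_le (N : ℕ) (u : ℕ → ℝ) :
    ‖(∑ k ∈ Finset.Icc 1 N, e2pi (u k))‖ ≤ (N : ℝ) := by
  calc ‖(∑ k ∈ Finset.Icc 1 N, e2pi (u k))‖
      ≤ ∑ k ∈ Finset.Icc 1 N, ‖(e2pi (u k))‖ := norm_sum_le _ _
    _ = ∑ k ∈ Finset.Icc 1 N, (1:ℝ) := Finset.sum_congr rfl fun k _ => abs_e2pi _
    _ = (N : ℝ) := by rw [Finset.sum_const, Nat.card_Icc]; simp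

lemma real_est (c δ ε : ℝ) (hc : 0 < c) (hδ0 : 0 < δ) (hδ1 : δ ≤ 1/2) (hε : 0 < ε)
    (N : ℕ) (hN : 1 ≤ N) (ρ : ℝ) (hρ : 1 ≤ ρ) :
    (min (N:ℝ) (ρ/(2*c)) ^ 2 + (N:ℝ)) * (1/(Real.pi * (ρ*ε)))^2
      ≤ ((1/(2*c))^((1:ℝ)-δ) + 1) / (Real.pi*ε)^2 * (N:ℝ)^((1:ℝ)+δ) * ρ^(-(1+δ):ℝ) := by
  have hπ := Real.pi_pos
  have hρ0 : (0:ℝ) < ρ := by linarith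
  have hN0 : (1:ℝ) ≤ (N:ℝ) := by exact_mod_cast hN
  set m := min (N:ℝ) (ρ/(2*c)) with hm
  set K' := (1/(2*c))^((1:ℝ)-δ) with hK'
  have hm0 : 0 < m := lt_min (by linarith) (by positivity)
  have hmsq : m^2 = m^((1:ℝ)+δ) * m^((1:ℝ)-δ) := by
    rw [← Real.rpow_add hm0]
    have h2 : (1:ℝ)+δ+((1:ℝ)-δ) = ((2:ℕ):ℝ) := by push_cast; ring
    rw [h2, Real.rpow_natCast]
  have ha : m^((1:ℝ)+δ) ≤ (N:ℝ)^((1:ℝ)+δ) :=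
    Real.rpow_le_rpow hm0.le (min_le_left _ _) (by linarith)
  have hb : m^((1:ℝ)-δ) ≤ ρ^((1:ℝ)-δ) * K' := by
    have h1 : m^((1:ℝ)-δ) ≤ (ρ/(2*c))^((1:ℝ)-δ) :=
      Real.rpow_le_rpow hm0.le (min_le_right _ _) (by linarith)
    have h2 : (ρ/(2*c))^((1:ℝ)-δ) = ρ^((1:ℝ)-δ) * K' := by
      rw [hK', Real.div_rpow hρ0.le (by linarith), Real.div_rpow zero_le_one (by linarith),
        Real.one_rpow]
      ring
    linarith
  have i1 : m^2 ≤ K' * ((N:ℝ)^((1:ℝ)+δ) * ρ^((1:ℝ)-δ)) := by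
    rw [hmsq]
    calc m^((1:ℝ)+δ) * m^((1:ℝ)-δ) ≤ (N:ℝ)^((1:ℝ)+δ) * (ρ^((1:ℝ)-δ) * K') := by
          apply mul_le_mul ha hb (Real.rpow_nonneg hm0.le _) (Real.rpow_nonneg (by linarith) _)
      _ = K' * ((N:ℝ)^((1:ℝ)+δ) * ρ^((1:ℝ)-δ)) := by ring
  have i2 : (N:ℝ) ≤ (N:ℝ)^((1:ℝ)+δ) * ρ^((1:ℝ)-δ) := by
    have h1 : (N:ℝ) ≤ (N:ℝ)^((1:ℝ)+δ) := by
      calc (N:ℝ) = (N:ℝ)^(1:ℝ) := (Real.rpow_one _).symm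
        _ ≤ (N:ℝ)^((1:ℝ)+δ) := Real.rpow_le_rpow_of_exponent_le hN0 (by linarith)
    have h2 : (1:ℝ) ≤ ρ^((1:ℝ)-δ) := by
      calc (1:ℝ) = ρ^(0:ℝ) := (Real.rpow_zero _).symm
        _ ≤ ρ^((1:ℝ)-δ) := Real.rpow_le_rpow_of_exponent_le hρ (by linarith)
    nlinarith [Real.rpow_nonneg (by linarith : (0:ℝ) ≤ (N:ℝ)) ((1:ℝ)+δ)]
  have key : m^2 + (N:ℝ) ≤ (K' + 1) * ((N:ℝ)^((1:ℝ)+δ) * ρ^((1:ℝ)-δ)) := by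
    have : (K' + 1) * ((N:ℝ)^((1:ℝ)+δ) * ρ^((1:ℝ)-δ))
        = K' * ((N:ℝ)^((1:ℝ)+δ) * ρ^((1:ℝ)-δ)) + (N:ℝ)^((1:ℝ)+δ) * ρ^((1:ℝ)-δ) := by ring
    linarith
  have hrho : ρ^((1:ℝ)-δ) / ρ^2 = ρ^(-(1+δ):ℝ) := by
    rw [← Real.rpow_natCast ρ 2, ← Real.rpow_sub hρ0]
    congr 1; push_cast; ring
  calc (m^2 + (N:ℝ)) * (1/(Real.pi * (ρ*ε)))^2
      ≤ ((K' + 1) * ((N:ℝ)^((1:ℝ)+δ) * ρ^((1:ℝ)-δ))) * (1/(Real.pi * (ρ*ε)))^2 :=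
        mul_le_mul_of_nonneg_right key (by positivity)
    _ = (K' + 1) / (Real.pi*ε)^2 * (N:ℝ)^((1:ℝ)+δ) * (ρ^((1:ℝ)-δ) / ρ^2) := by
        field_simp
    _ = (K' + 1) / (Real.pi*ε)^2 * (N:ℝ)^((1:ℝ)+δ) * ρ^(-(1+δ):ℝ) := by rw [hrho]

theorem stmt10 (α : ℝ) (c : ℝ) (hc : 0 < c)
    (hbad : ∀ q : ℕ, 0 < q → c / (q : ℝ) ≤ distNearestInt ((q : ℝ) * α))
    (δ : ℝ) (hδ0 : 0 < δ) (hδ1 : δ ≤ 1/2) (ε : ℝ) (hε : 0 < ε)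
    {Ω : Type*} [MeasurableSpace Ω] (P : Measure Ω) [IsProbabilityMeasure P]
    (X : ℕ → Ω → ℝ) (hXm : ∀ n, Measurable (X n))
    (hunif : ∀ n, Measure.map (X n) P = volume.restrict (Set.Icc (0:ℝ) 1))
    (hindep : iIndepFun X P) :
    ∃ C : ℝ, ∀ N : ℕ,
      (∑' r : ℤ, if r ≠ 0 then
          ‖(∑ k ∈ Finset.Icc 1 N, ∑ l ∈ Finset.Icc 1 N, if l = k then 0 else
            ∫ ω, e2pi ((r : ℝ) * (ε * (X k ω - X l ω) + (k : ℝ) * α - (l : ℝ) * α)) ∂P)‖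
        else 0)
      ≤ C * (N : ℝ) ^ ((1:ℝ) + δ) := by
  have hπ := Real.pi_pos
  have hbad' : ∀ r : ℤ, r ≠ 0 → c / |(r:ℝ)| ≤ distNearestInt ((r:ℝ) * α) := by
    intro r hr
    have hn : 0 < r.natAbs := Int.natAbs_pos.mpr hr
    have habs : |(r:ℝ)| = (r.natAbs : ℝ) := by
      rw [← Int.cast_abs, Int.abs_eq_natAbs, Int.cast_natCast]
    rcases Int.natAbs_eq r with h | h
    · have hcast : (r:ℝ) = (r.natAbs : ℝ) := by
        conv_lhs => rw [h]
        push_cast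
        rw [habs]
      rw [habs, hcast]
      exact hbad _ hn
    · have hcast : (r:ℝ) = -(r.natAbs : ℝ) := by
        conv_lhs => rw [h]
        push_cast
        rw [habs]
      rw [habs, hcast]
      have h3 : -(r.natAbs : ℝ) * α = -((r.natAbs : ℝ) * α) := by ring
      rw [h3, distNearestInt_neg]
      exact hbad _ hn
  set C₀ := ((1/(2*c))^((1:ℝ)-δ) + 1) / (Real.pi*ε)^2 with hC₀
  have hC₀0 : 0 ≤ C₀ := by positivity
  set g : ℤ → ℝ := fun r => |(r:ℝ)|^(-(1+δ):ℝ) with hgdef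
  have hg_summ : Summable g := Real.summable_abs_int_rpow (by linarith)
  have hg_nonneg : ∀ r, 0 ≤ g r := fun r => Real.rpow_nonneg (abs_nonneg _) _
  set Z := ∑' r : ℤ, g r with hZ
  refine ⟨C₀ * Z, fun N => ?_⟩
  set A := (N : ℝ) ^ ((1:ℝ) + δ) with hA
  have hA0 : 0 ≤ A := Real.rpow_nonneg (Nat.cast_nonneg _) _
  set F : ℤ → ℝ := fun r => if r ≠ 0 then
      ‖(∑ k ∈ Finset.Icc 1 N, ∑ l ∈ Finset.Icc 1 N, if l = k then 0 else
        ∫ ω, e2pi ((r : ℝ) * (ε * (X k ω - X l ω) + (k : ℝ) * α - (l : ℝ) * α)) ∂P)‖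
      else 0 with hFdef
  have hF_nonneg : ∀ r, 0 ≤ F r := by
    intro r
    rw [hFdef]
    by_cases h : r ≠ 0 <;> simp [h]
  have hF_le : ∀ r : ℤ, F r ≤ C₀ * A * g r := by
    intro r
    by_cases hr : r ≠ 0
    · rcases Nat.eq_zero_or_pos N with hN0 | hN1
      · have hF0 : F r = 0 := by
          rw [hFdef]
          simp [hr, hN0]
        rw [hF0]
        positivity
      · show F r ≤ C₀ * A * g r
        rw [hFdef]
        simp only []
        rw [if_pos hr, term_eq P X hXm hunif hindep ε α r N]
        set ρ := |(r:ℝ)| with hρdef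
        have hρ1 : (1:ℝ) ≤ ρ := by
          rw [hρdef]
          exact_mod_cast Int.one_le_abs (by exact_mod_cast hr)
        have hρ0 : (0:ℝ) < ρ := by linarith
        have hd : c / ρ ≤ distNearestInt ((r:ℝ) * α) := hbad' r hr
        have hd0 : 0 < distNearestInt ((r:ℝ) * α) := lt_of_lt_of_le (by positivity) hd
        set d := distNearestInt ((r:ℝ) * α) with hddef
        have hS : ∀ v : ℝ, distNearestInt v = d →
            ∀ u : ℕ → ℝ, (∀ k, u k = (k:ℝ) * v) →
            ‖(∑ k ∈ Finset.Icc 1 N, e2pi (u k))‖ ≤ min (N:ℝ) (ρ/(2*c)) := by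
          intro v hv u hu
          apply le_min (abs_sum_e2pi_le N u)
          have h1 : (∑ k ∈ Finset.Icc 1 N, e2pi (u k)) = ∑ k ∈ Finset.Icc 1 N, e2pi ((k:ℝ) * v) :=
            Finset.sum_congr rfl fun k _ => by rw [hu k]
          rw [h1]
          have h2 := geom_bound N v (by rw [hv]; exact hd0)
          rw [hv] at h2
          have h3 : 1 / (2 * d) ≤ ρ / (2 * c) := by
            rw [div_le_div_iff₀ (by positivity) (by positivity)]
            have hcρ : c / ρ * ρ ≤ d * ρ := mul_le_mul_of_nonneg_right hd hρ0.le
            rw [div_mul_cancel₀ c (ne_of_gt hρ0)] at hcρ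
            nlinarith
          linarith
        have hS₁ : ‖(∑ k ∈ Finset.Icc 1 N, e2pi ((r:ℝ)*k*α))‖ ≤ min (N:ℝ) (ρ/(2*c)) :=
          hS ((r:ℝ)*α) hddef.symm _ (fun k => by ring)
        have hS₂ : ‖(∑ l ∈ Finset.Icc 1 N, e2pi (-(r:ℝ)*l*α))‖ ≤ min (N:ℝ) (ρ/(2*c)) :=
          hS (-((r:ℝ)*α)) (by rw [distNearestInt_neg, hddef]) _ (fun l => by ring)
        have hrne : (r:ℝ) ≠ 0 := Int.cast_ne_zero.mpr hr
        have htne : (r:ℝ)*ε ≠ 0 := mul_ne_zero hrne (ne_of_gt hε)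
        have hW : ‖(psi ((r:ℝ)*ε) * psi (-((r:ℝ)*ε)))‖ ≤ (1/(Real.pi * (ρ*ε)))^2 := by
          rw [norm_mul]
          have h1 := abs_psi_le ((r:ℝ)*ε) htne
          have h2 := abs_psi_le (-((r:ℝ)*ε)) (neg_ne_zero.mpr htne)
          rw [abs_neg] at h2
          have habs : |(r:ℝ)*ε| = ρ*ε := by rw [abs_mul, abs_of_pos hε, hρdef]
          rw [habs] at h1 h2
          calc ‖(psi ((r:ℝ)*ε))‖ * ‖(psi (-((r:ℝ)*ε)))‖
              ≤ (1/(Real.pi * (ρ*ε))) * (1/(Real.pi * (ρ*ε))) := by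
                apply mul_le_mul h1 h2 (norm_nonneg _) (by positivity)
            _ = (1/(Real.pi * (ρ*ε)))^2 := (sq _).symm
        have hmain : ‖(((∑ k ∈ Finset.Icc 1 N, e2pi ((r:ℝ)*k*α))
              * (∑ l ∈ Finset.Icc 1 N, e2pi (-(r:ℝ)*l*α)) - (N:ℂ))
              * (psi ((r:ℝ)*ε) * psi (-((r:ℝ)*ε))))‖
            ≤ (min (N:ℝ) (ρ/(2*c)) ^ 2 + (N:ℝ)) * (1/(Real.pi * (ρ*ε)))^2 := by
          rw [norm_mul]
          apply mul_le_mul ?_ hW (norm_nonneg _) (by positivity)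
          calc ‖((∑ k ∈ Finset.Icc 1 N, e2pi ((r:ℝ)*k*α))
                  * (∑ l ∈ Finset.Icc 1 N, e2pi (-(r:ℝ)*l*α)) - (N:ℂ))‖
              ≤ ‖((∑ k ∈ Finset.Icc 1 N, e2pi ((r:ℝ)*k*α))
                  * (∑ l ∈ Finset.Icc 1 N, e2pi (-(r:ℝ)*l*α)))‖ + ‖((N:ℂ))‖ :=
                norm_sub_le _ _
            _ = ‖(∑ k ∈ Finset.Icc 1 N, e2pi ((r:ℝ)*k*α))‖
                  * ‖(∑ l ∈ Finset.Icc 1 N, e2pi (-(r:ℝ)*l*α))‖ + (N:ℝ) := by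
                rw [norm_mul, Complex.norm_natCast]
            _ ≤ min (N:ℝ) (ρ/(2*c)) * min (N:ℝ) (ρ/(2*c)) + (N:ℝ) := by
                have := mul_le_mul hS₁ hS₂ (norm_nonneg _)
                  (le_min (Nat.cast_nonneg _) (by positivity))
                linarith
            _ = min (N:ℝ) (ρ/(2*c)) ^ 2 + (N:ℝ) := by rw [sq]
        have hgr : g r = ρ^(-(1+δ):ℝ) := rfl
        calc ‖(((∑ k ∈ Finset.Icc 1 N, e2pi ((r:ℝ)*k*α))
              * (∑ l ∈ Finset.Icc 1 N, e2pi (-(r:ℝ)*l*α)) - (N:ℂ))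
              * (psi ((r:ℝ)*ε) * psi (-((r:ℝ)*ε))))‖
            ≤ (min (N:ℝ) (ρ/(2*c)) ^ 2 + (N:ℝ)) * (1/(Real.pi * (ρ*ε)))^2 := hmain
          _ ≤ ((1/(2*c))^((1:ℝ)-δ) + 1) / (Real.pi*ε)^2 * (N:ℝ)^((1:ℝ)+δ) * ρ^(-(1+δ):ℝ) :=
              real_est c δ ε hc hδ0 hδ1 hε N hN1 ρ hρ1
          _ = C₀ * A * g r := by rw [hgr, hC₀, hA]
    · push_neg at hr
      subst hr
      have hF0 : F 0 = 0 := by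
        rw [hFdef]
        simp
      have hg0 : g (0:ℤ) = 0 := by
        rw [hgdef]
        simp only [Int.cast_zero, abs_zero]
        exact Real.zero_rpow (ne_of_lt (by linarith))
      rw [hF0, hg0, mul_zero]
  have hF_summ : Summable F :=
    Summable.of_nonneg_of_le hF_nonneg hF_le (hg_summ.mul_left (C₀ * A))
  calc ∑' r : ℤ, F r ≤ ∑' r : ℤ, C₀ * A * g r :=
        Summable.tsum_le_tsum hF_le hF_summ (hg_summ.mul_left (C₀ * A))
    _ = C₀ * A * Z := by rw [hZ, ← tsum_mul_left]
    _ = C₀ * Z * A := by ring
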